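/- arXiv:1511.02056 — 14 statements merged into one kernel-verified Lean document; each statement's English description precedes it below -/
import Mathlib

section
/- For L₁, L₂ ⊆ A*, L₁ ≡_end L₂ holds if and only if: (i) for every x₁ ∈ L₁ and w₁ ∈ A* there exists x₂ ∈ L₂ with x₁w₁ prefix-comparable to x₂, and (ii) for every x₂ ∈ L₂ and w₂ ∈ A* there exists x₁ ∈ L₁ with x₁ prefix-comparable to x₂w₂. -/
open List

/-- Finite words over the alphabet A = {0,1}. -/
abbrev W := List Bool

/-- Prefix-comparability of words. -/
def pc (x y : W) : Prop := x <+: y ∨ y <+: x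

/-- `RI L` is the right ideal `L·A*` generated by `L`. -/
def RI (L : Set W) : Set W := {y | ∃ x ∈ L, ∃ w : W, y = x ++ w}

/-- `R` is a right ideal of `A*`. -/
def isRightIdeal (R : Set W) : Prop := ∀ x ∈ R, ∀ w : W, x ++ w ∈ R

/-- End-equivalence of sets: `L₁A*` and `L₂A*` intersect the same right ideals. -/
def endEquiv (L₁ L₂ : Set W) : Prop :=
  ∀ R : Set W, isRightIdeal R → ((R ∩ RI L₁).Nonempty ↔ (R ∩ RI L₂).Nonempty)

/-- A prefix code: no two distinct elements are prefix-comparable. -/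
def isPrefixCode (P : Set W) : Prop := ∀ x ∈ P, ∀ y ∈ P, x <+: y → x = y

/-- Right-ideal morphism, as a partial function `A* → A*` (using `Option`):
    whenever `f x = some y`, also `f (x++w) = some (y++w)`.
    (This forces the domain to be a right ideal.) -/
def isRIM (f : W → Option W) : Prop :=
  ∀ x y : W, f x = some y → ∀ w : W, f (x ++ w) = some (y ++ w)

/-- Domain of a partial function. -/
def Dom (f : W → Option W) : Set W := {x | f x ≠ none}

/-- Image of a partial function. -/
def Im (f : W → Option W) : Set W := {y | ∃ x, f x = some y}

/-- The prefix code of minimal elements generating a right ideal `S`. -/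
def prefC (S : Set W) : Set W := {x | x ∈ S ∧ ∀ p : W, p <+: x → p ≠ x → p ∉ S}

/-- Domain code of a right-ideal morphism. -/
def domC (f : W → Option W) : Set W := prefC (Dom f)

/-- Image code of a right-ideal morphism. -/
def imC (f : W → Option W) : Set W := prefC (Im f)

/-- Image of a set under a partial function. -/
def fImage (f : W → Option W) (L : Set W) : Set W := {y | ∃ x ∈ L, f x = some y}

/-- Preimage of a set under a partial function. -/
def fPreim (f : W → Option W) (S : Set W) : Set W := {x | ∃ y ∈ S, f x = some y}

/-- End-equivalence of right-ideal morphisms: the domains are end-equivalent,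
    and the functions agree on the common domain. -/
def endEquivF (f g : W → Option W) : Prop :=
  endEquiv (Dom f) (Dom g) ∧ ∀ x, x ∈ Dom f → x ∈ Dom g → f x = g x

/-- Bounded end-equivalence of sets. -/
def bdSets (P Q : Set W) : Prop :=
  endEquiv P Q ∧ ∃ β : ℕ → ℕ, ∀ x₁ ∈ P, ∀ x₂ ∈ Q, pc x₁ x₂ →
    x₁.length ≤ β x₂.length ∧ x₂.length ≤ β x₁.length

/-- Bounded end-equivalence of right-ideal morphisms. -/
def bdEquivF (f g : W → Option W) : Prop :=
  bdSets (domC f) (domC g) ∧ endEquivF f g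

/-- Concatenation of a finite word with an infinite word. -/
def wcat (x : W) (w : ℕ → Bool) : ℕ → Bool :=
  fun i => if h : i < x.length then x.get ⟨i, h⟩ else w (i - x.length)

/-- `ends L = L·A^ω`: the infinite words having a prefix in `L`. -/
def ends (L : Set W) : Set (ℕ → Bool) := {u | ∃ x ∈ L, ∃ w : ℕ → Bool, u = wcat x w}

/-- Composition of partial functions: `pcomp f g = f ∘ g` (apply `g` first). -/
def pcomp (f g : W → Option W) : W → Option W := fun x => (g x).bind f

/-- `sub f g`: the partial function `g` extends the partial function `f`. -/
def sub (f g : W → Option W) : Prop := ∀ x y : W, f x = some y → g x = some y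

/-- characterization of end-equivalence via prefix-comparability. -/
theorem endEquiv_iff_prefixComparable (L₁ L₂ : Set W) :
    endEquiv L₁ L₂ ↔
      ((∀ x₁ ∈ L₁, ∀ w₁ : W, ∃ x₂ ∈ L₂, pc (x₁ ++ w₁) x₂) ∧
       (∀ x₂ ∈ L₂, ∀ w₂ : W, ∃ x₁ ∈ L₁, pc x₁ (x₂ ++ w₂))) := by

  constructor
  · intro h
    constructor
    · intro x₁ hx₁ w₁
      have hRI : isRightIdeal (RI {x₁ ++ w₁}) := by
        rintro z ⟨a, ha, u, rfl⟩ v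
        exact ⟨a, ha, u ++ v, List.append_assoc a u v⟩
      have h1 : (RI {x₁ ++ w₁} ∩ RI L₁).Nonempty :=
        ⟨x₁ ++ w₁, ⟨x₁ ++ w₁, rfl, [], by simp⟩, ⟨x₁, hx₁, w₁, rfl⟩⟩
      obtain ⟨z, ⟨a, ha, u, hu⟩, ⟨x₂, hx₂, v, hv⟩⟩ := (h _ hRI).mp h1
      refine ⟨x₂, hx₂, ?_⟩
      rcases ha with rfl
      have p1 : x₁ ++ w₁ <+: z := ⟨u, hu.symm⟩
      have p2 : x₂ <+: z := ⟨v, hv.symm⟩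
      exact List.prefix_or_prefix_of_prefix p1 p2
    · intro x₂ hx₂ w₂
      have hRI : isRightIdeal (RI {x₂ ++ w₂}) := by
        rintro z ⟨a, ha, u, rfl⟩ v
        exact ⟨a, ha, u ++ v, List.append_assoc a u v⟩
      have h2 : (RI {x₂ ++ w₂} ∩ RI L₂).Nonempty :=
        ⟨x₂ ++ w₂, ⟨x₂ ++ w₂, rfl, [], by simp⟩, ⟨x₂, hx₂, w₂, rfl⟩⟩
      obtain ⟨z, ⟨a, ha, u, hu⟩, ⟨x₁, hx₁, v, hv⟩⟩ := (h _ hRI).mpr h2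
      refine ⟨x₁, hx₁, ?_⟩
      rcases ha with rfl
      have p1 : x₁ <+: z := ⟨v, hv.symm⟩
      have p2 : x₂ ++ w₂ <+: z := ⟨u, hu.symm⟩
      exact List.prefix_or_prefix_of_prefix p1 p2
  · rintro ⟨h1, h2⟩ R hR
    constructor
    · rintro ⟨z, hzR, x₁, hx₁, w₁, rfl⟩
      obtain ⟨x₂, hx₂, hpc⟩ := h1 x₁ hx₁ w₁
      rcases hpc with ⟨t, ht⟩ | ⟨t, ht⟩
      · exact ⟨x₂, ht ▸ hR _ hzR t, x₂, hx₂, [], by simp⟩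
      · exact ⟨x₁ ++ w₁, hzR, x₂, hx₂, t, ht.symm⟩
    · rintro ⟨z, hzR, x₂, hx₂, w₂, rfl⟩
      obtain ⟨x₁, hx₁, hpc⟩ := h2 x₂ hx₂ w₂
      rcases hpc with ⟨t, ht⟩ | ⟨t, ht⟩
      · exact ⟨x₂ ++ w₂, hzR, x₁, hx₁, t, ht.symm⟩
      · exact ⟨x₁, ht ▸ hR _ hzR t, x₁, hx₁, [], by simp⟩
end

section
/- If L₁ ≡_end L₂ then L₁ ≡_end L₂ ≡_end (L₁A* ∩ L₂A*) ≡_end (L₁ ∪ L₂). -/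
open List

lemma mem_RI_self {L : Set W} {x : W} (hx : x ∈ L) : x ∈ RI L :=
  ⟨x, hx, [], by simp⟩

lemma RI_rightIdeal (L : Set W) : isRightIdeal (RI L) := by
  rintro x ⟨a, ha, v, rfl⟩ w
  exact ⟨a, ha, v ++ w, by simp⟩

lemma inter_rightIdeal {R S : Set W} (hR : isRightIdeal R) (hS : isRightIdeal S) :
    isRightIdeal (R ∩ S) := fun x hx w => ⟨hR x hx.1 w, hS x hx.2 w⟩

lemma RI_RI_subset {L : Set W} : RI (RI L) ⊆ RI L := by
  rintro y ⟨x, hx, w, rfl⟩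
  exact RI_rightIdeal L x hx w

/-- L₁ ≡_end L₂ implies L₁ ≡_end L₂ ≡_end L₁A* ∩ L₂A* ≡_end L₁ ∪ L₂. -/
theorem endEquiv_inter_union (L₁ L₂ : Set W) (h : endEquiv L₁ L₂) :
    endEquiv L₁ L₂ ∧ endEquiv L₂ (RI L₁ ∩ RI L₂) ∧
      endEquiv (RI L₁ ∩ RI L₂) (L₁ ∪ L₂) := by
  refine ⟨h, ?_, ?_⟩
  · intro R hR
    constructor
    · rintro ⟨x, hxR, hx2⟩
      have hRI : isRightIdeal (R ∩ RI L₂) := inter_rightIdeal hR (RI_rightIdeal L₂)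
      have := (h (R ∩ RI L₂) hRI).2 ⟨x, ⟨hxR, hx2⟩, hx2⟩
      obtain ⟨y, ⟨hyR, hy2⟩, hy1⟩ := this
      exact ⟨y, hyR, mem_RI_self ⟨hy1, hy2⟩⟩
    · rintro ⟨y, hyR, ⟨x, hx, w, rfl⟩⟩
      exact ⟨x ++ w, hyR, RI_rightIdeal L₂ x hx.2 w⟩
  · intro R hR
    constructor
    · rintro ⟨y, hyR, ⟨x, hx, w, rfl⟩⟩
      obtain ⟨a, ha, v, rfl⟩ := hx.1
      exact ⟨a ++ v ++ w, hyR, ⟨a, Or.inl ha, v ++ w, by simp⟩⟩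
    · rintro ⟨x, hxR, ⟨a, ha, w, rfl⟩⟩
      rcases ha with ha | ha
      · have hx1 : a ++ w ∈ RI L₁ := ⟨a, ha, w, rfl⟩
        have hRI : isRightIdeal (R ∩ RI L₁) := inter_rightIdeal hR (RI_rightIdeal L₁)
        have := (h (R ∩ RI L₁) hRI).1 ⟨a ++ w, ⟨hxR, hx1⟩, hx1⟩
        obtain ⟨y, ⟨hyR, hy1⟩, hy2⟩ := this
        exact ⟨y, hyR, mem_RI_self ⟨hy1, hy2⟩⟩
      · have hx2 : a ++ w ∈ RI L₂ := ⟨a, ha, w, rfl⟩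
        have hRI : isRightIdeal (R ∩ RI L₂) := inter_rightIdeal hR (RI_rightIdeal L₂)
        have := (h (R ∩ RI L₂) hRI).2 ⟨a ++ w, ⟨hxR, hx2⟩, hx2⟩
        obtain ⟨y, ⟨hyR, hy2⟩, hy1⟩ := this
        exact ⟨y, hyR, mem_RI_self ⟨hy1, hy2⟩⟩
end

section
/- If f is a right-ideal morphism of A* and L₁, L₂ ⊆ Dom(f) satisfy L₁ ≡_end L₂, then f(L₁) ≡_end f(L₂). -/
open List

lemma endEquiv_image_aux (f : W → Option W) (hf : isRIM f) (L₁ L₂ : Set W)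
    (h₂ : L₂ ⊆ Dom f)
    (h : ∀ R : Set W, isRightIdeal R →
      ((R ∩ RI L₁).Nonempty → (R ∩ RI L₂).Nonempty))
    (R : Set W) (hR : isRightIdeal R) :
    (R ∩ RI (fImage f L₁)).Nonempty → (R ∩ RI (fImage f L₂)).Nonempty := by
  rintro ⟨z, hzR, y, ⟨x, hxL, hfx⟩, w, rfl⟩
  have hS : isRightIdeal {u | ∃ v, f u = some v ∧ v ∈ R} := by
    rintro u ⟨v, hv, hvR⟩ w'
    exact ⟨v ++ w', hf u v hv w', hR v hvR w'⟩
  have hne : ({u | ∃ v, f u = some v ∧ v ∈ R} ∩ RI L₁).Nonempty :=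
    ⟨x ++ w, ⟨y ++ w, hf x y hfx w, hzR⟩, x, hxL, w, rfl⟩
  obtain ⟨u, ⟨v, hv, hvR⟩, x₂, hx₂, w₂, rfl⟩ := h _ hS hne
  obtain ⟨y₂, hy₂⟩ : ∃ y₂, f x₂ = some y₂ := by
    have := h₂ hx₂
    cases hc : f x₂ with
    | none => exact absurd hc this
    | some y₂ => exact ⟨y₂, rfl⟩
  have hcat : f (x₂ ++ w₂) = some (y₂ ++ w₂) := hf _ _ hy₂ w₂
  have hveq : v = y₂ ++ w₂ := by
    exact Option.some.inj (hv.symm.trans hcat)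
  exact ⟨v, hvR, y₂, ⟨x₂, hx₂, hy₂⟩, w₂, hveq⟩

/-- a right-ideal morphism preserves end-equivalence of subsets of its domain. -/
theorem endEquiv_image (f : W → Option W) (hf : isRIM f) (L₁ L₂ : Set W)
    (h₁ : L₁ ⊆ Dom f) (h₂ : L₂ ⊆ Dom f) (h : endEquiv L₁ L₂) :
    endEquiv (fImage f L₁) (fImage f L₂) := by
  intro R hR
  exact ⟨endEquiv_image_aux f hf L₁ L₂ h₂ (fun R' hR' => (h R' hR').mp) R hR,
    endEquiv_image_aux f hf L₂ L₁ h₁ (fun R' hR' => (h R' hR').mpr) R hR⟩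
end

section
/- For any right-ideal morphism f of A*, f(domC(f)) ≡_end imC(f). -/
open List

/-- Every element of a set has a prefix in its minimal prefix code. -/
lemma exists_mem_prefC_aux (S : Set W) :
    ∀ n : ℕ, ∀ x : W, x.length = n → x ∈ S → ∃ p ∈ prefC S, p <+: x := by
  intro n
  induction n using Nat.strong_induction_on with
  | _ n ih =>
    intro x hlen hx
    by_cases h : ∀ p : W, p <+: x → p ≠ x → p ∉ S
    · exact ⟨x, ⟨hx, h⟩, List.prefix_refl x⟩
    · push_neg at h
      obtain ⟨p, hpx, hpne, hpS⟩ := h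
      have hlt : p.length < n := by
        subst hlen
        exact lt_of_le_of_ne (List.IsPrefix.length_le hpx)
          (fun hl => hpne (List.IsPrefix.eq_of_length hpx hl))
      obtain ⟨q, hq, hqp⟩ := ih p.length hlt p rfl hpS
      exact ⟨q, hq, hqp.trans hpx⟩

lemma exists_mem_prefC (S : Set W) : ∀ x ∈ S, ∃ p ∈ prefC S, p <+: x :=
  fun x hx => exists_mem_prefC_aux S x.length x rfl hx

/-- for any right-ideal morphism f, f(domC(f)) ≡_end imC(f). -/
theorem image_domC_endEquiv_imC (f : W → Option W) (hf : isRIM f) :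
    endEquiv (fImage f (domC f)) (imC f) := by
  have h1 : RI (fImage f (domC f)) = Im f := by
    ext y
    constructor
    · rintro ⟨z, ⟨x, hxd, hfx⟩, w, rfl⟩
      exact ⟨x ++ w, hf x z hfx w⟩
    · rintro ⟨x, hfx⟩
      obtain ⟨p, hp, hpre⟩ := exists_mem_prefC (Dom f) x (by simp [Dom, hfx])
      obtain ⟨w, rfl⟩ := hpre
      have hpD : p ∈ Dom f := hp.1
      obtain ⟨z, hz⟩ : ∃ z, f p = some z := by
        cases hfp : f p with
        | none => exact absurd hfp hpD
        | some z => exact ⟨z, rfl⟩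
      have := hf p z hz w
      rw [hfx] at this
      exact ⟨z, ⟨p, hp, hz⟩, w, (Option.some_injective _ this)⟩
  have h2 : RI (imC f) = Im f := by
    ext y
    constructor
    · rintro ⟨z, hz, w, rfl⟩
      obtain ⟨x, hx⟩ := hz.1
      exact ⟨x ++ w, hf x z hx w⟩
    · intro hy
      obtain ⟨p, hp, w, rfl⟩ := exists_mem_prefC (Im f) y hy
      exact ⟨p, hp, w, rfl⟩
  intro R hR
  rw [h1, h2]
end

section
/- Let P ⊂ A* be a prefix code and let v ∈ ends(P) be an infinite word with some prefix in P. Then there exists a prefix code P(−v) such that ends(P(−v)) = ends(P) \ {v} and P(−v) ≡_end P. Concretely, if v₁…v_{i₀} ∈ P is a prefix of v, one can take P(−v) = (P \ {v₁…v_{i₀}}) ∪ { v₁…v_j·(complement of v_{j+1}) : j ≥ i₀ }. -/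
open List

/-!
Replace the element `x = v₀ ⋯ v_{n-1}` of `P` lying on `v` by the detours
`v₀ ⋯ v_{j-1} (¬v_j)`, `j ≥ n`. The detours form a prefix code of words extending `x`, so the
result is again a prefix code. An infinite word through `x` other than `v` passes through the
detour at the first position where it leaves `v`, and `v` passes through none of them. Finally,
every finite extension `w` of `x` becomes an extension of a detour once it is followed by the
letter `¬v_{|w|}`, which gives end-equivalence.
-/

def pre (u : ℕ → Bool) (n : ℕ) : W := (List.range n).map u

section Prefixes

variable (u : ℕ → Bool)

@[simp] theorem length_pre (n : ℕ) : (pre u n).length = n := by simp [pre]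

@[simp] theorem getElem_pre {n i : ℕ} (h : i < (pre u n).length) : (pre u n)[i] = u i := by
  simp [pre]

theorem pre_succ (n : ℕ) : pre u (n + 1) = pre u n ++ [u n] := by
  simp [pre, List.range_succ]

theorem take_pre (m n : ℕ) : (pre u n).take m = pre u (min m n) := by
  rw [pre, ← List.map_take, List.take_range, pre]

theorem pre_prefix_pre {m n : ℕ} (h : m ≤ n) : pre u m <+: pre u n := by
  rw [← min_eq_left h, ← take_pre]
  exact List.take_prefix _ _

theorem pre_eq_pre_iff {v : ℕ → Bool} {n : ℕ} :
    pre u n = pre v n ↔ ∀ i < n, u i = v i := by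
  simp [pre, List.map_inj_left]

theorem pre_eq_of_prefix {x y : W} (hxy : x <+: y) (hy : pre u y.length = y) :
    pre u x.length = x :=
  calc pre u x.length = (pre u y.length).take x.length := by
        rw [take_pre, min_eq_left hxy.length_le]
    _ = x := by rw [hy, ← List.prefix_iff_eq_take.mp hxy]

end Prefixes

theorem exists_eq_wcat_iff {u : ℕ → Bool} {x : W} :
    (∃ w, u = wcat x w) ↔ pre u x.length = x := by
  constructor
  · rintro ⟨w, rfl⟩
    refine List.ext_getElem (length_pre _ _) fun i hi _ => ?_
    simp [wcat, show i < x.length by simpa using hi]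
  · intro hx
    refine ⟨fun i => u (i + x.length), funext fun i => ?_⟩
    by_cases hi : i < x.length
    · simp only [wcat, hi, dite_true, List.get_eq_getElem]
      calc u i = (pre u x.length)[i]'(by simpa using hi) := (getElem_pre u _).symm
        _ = x[i] := List.getElem_of_eq hx _
    · simp only [wcat, hi, dite_false]
      congr 1
      omega

theorem mem_ends_iff {L : Set W} {u : ℕ → Bool} :
    u ∈ ends L ↔ ∃ x ∈ L, pre u x.length = x := by
  simp only [ends, Set.mem_ofPred_eq, exists_eq_wcat_iff]

theorem ends_union (L₁ L₂ : Set W) : ends (L₁ ∪ L₂) = ends L₁ ∪ ends L₂ := by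
  ext u
  simp only [mem_ends_iff, Set.mem_union, or_and_right, exists_or]

theorem ends_singleton (x : W) : ends {x} = {u | pre u x.length = x} := by
  ext u
  simp [mem_ends_iff]

theorem mem_RI_iff {L : Set W} {y : W} : y ∈ RI L ↔ ∃ x ∈ L, x <+: y := by
  simp only [RI, Set.mem_ofPred_eq, List.IsPrefix, eq_comm]

theorem endEquiv_of_RI_subset {L₁ L₂ : Set W} (hsub : RI L₁ ⊆ RI L₂)
    (hcofinal : ∀ y ∈ RI L₂, ∃ s, y ++ s ∈ RI L₁) : endEquiv L₁ L₂ := by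
  intro R hR
  refine ⟨fun ⟨y, hyR, hy⟩ => ⟨y, hyR, hsub hy⟩, fun ⟨y, hyR, hy⟩ => ?_⟩
  obtain ⟨s, hs⟩ := hcofinal y hy
  exact ⟨y ++ s, hR y hyR s, hs⟩

namespace isPrefixCode

variable {P : Set W} (hP : isPrefixCode P)
include hP

theorem eq_of_prefix_of_prefix {x y w : W} (hx : x ∈ P) (hy : y ∈ P)
    (hxw : x <+: w) (hyw : y <+: w) : x = y := by
  rcases List.prefix_or_prefix_of_prefix hxw hyw with h | h
  · exact hP x hx y hy h
  · exact (hP y hy x hx h).symm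

theorem eq_of_pre_eq {x y : W} {u : ℕ → Bool} (hx : x ∈ P) (hy : y ∈ P)
    (hxu : pre u x.length = x) (hyu : pre u y.length = y) : x = y :=
  hP.eq_of_prefix_of_prefix hx hy (hxu ▸ pre_prefix_pre u (le_max_left _ _))
    (hyu ▸ pre_prefix_pre u (le_max_right _ _))

theorem diff_union {x : W} {C : Set W} (hx : x ∈ P) (hC : isPrefixCode C)
    (hCx : ∀ z ∈ C, x <+: z) : isPrefixCode (P \ {x} ∪ C) := by
  rintro y (⟨hyP, hyx⟩ | hyC) z (⟨hzP, hzx⟩ | hzC) hyz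
  · exact hP y hyP z hzP hyz
  · exact absurd (hP.eq_of_prefix_of_prefix hx hyP (hCx z hzC) hyz).symm hyx
  · exact absurd (hP x hx z hzP ((hCx y hyC).trans hyz)).symm hzx
  · exact hC y hyC z hzC hyz

end isPrefixCode

theorem endEquiv_diff_union {P C : Set W} {x : W} (hx : x ∈ P) (hCx : ∀ z ∈ C, x <+: z)
    (hC : ∀ w, x <+: w → ∃ s, w ++ s ∈ RI C) : endEquiv (P \ {x} ∪ C) P := by
  refine endEquiv_of_RI_subset (fun y hy => ?_) (fun y hy => ?_)
  · obtain ⟨z, hz | hz, hzy⟩ := mem_RI_iff.mp hy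
    · exact mem_RI_iff.mpr ⟨z, hz.1, hzy⟩
    · exact mem_RI_iff.mpr ⟨x, hx, (hCx z hz).trans hzy⟩
  · obtain ⟨z, hzP, hzy⟩ := mem_RI_iff.mp hy
    by_cases hzx : z = x
    · obtain ⟨s, hs⟩ := hC y (hzx ▸ hzy)
      obtain ⟨c, hc, hcy⟩ := mem_RI_iff.mp hs
      exact ⟨s, mem_RI_iff.mpr ⟨c, Or.inr hc, hcy⟩⟩
    · exact ⟨[], mem_RI_iff.mpr ⟨z, Or.inl ⟨hzP, hzx⟩, hzy.trans (List.prefix_append _ _)⟩⟩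

/-- The paper's `v₁ ⋯ v_j · (complement of v_{j+1})`, with positions counted from `0`. -/
def flipPrefix (v : ℕ → Bool) (j : ℕ) : W := pre v j ++ [!v j]

def detours (v : ℕ → Bool) (n : ℕ) : Set W := flipPrefix v '' Set.Ici n

section Detours

variable (v : ℕ → Bool)

@[simp] theorem length_flipPrefix (j : ℕ) : (flipPrefix v j).length = j + 1 := by
  simp [flipPrefix]

theorem pre_prefix_flipPrefix {n j : ℕ} (h : n ≤ j) : pre v n <+: flipPrefix v j :=
  (pre_prefix_pre v h).trans (List.prefix_append _ _)

theorem flipPrefix_not_prefix_pre (j n : ℕ) : ¬ flipPrefix v j <+: pre v n := by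
  intro hj
  have := pre_eq_of_prefix v hj (by rw [length_pre])
  rw [length_flipPrefix, pre_succ, flipPrefix, List.append_cancel_left_eq] at this
  simp at this

theorem eq_of_flipPrefix_prefix {j k : ℕ} (h : flipPrefix v j <+: flipPrefix v k) : j = k := by
  have hjk : j ≤ k := by simpa using h.length_le
  by_contra hne
  refine flipPrefix_not_prefix_pre v j k ?_
  exact List.prefix_of_prefix_length_le h (List.prefix_append _ _) (by simp; omega)

theorem isPrefixCode_detours (n : ℕ) : isPrefixCode (detours v n) := by
  rintro _ ⟨j, -, rfl⟩ _ ⟨k, -, rfl⟩ h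
  rw [eq_of_flipPrefix_prefix v h]

theorem pre_prefix_of_mem_detours {n : ℕ} {z : W} (hz : z ∈ detours v n) :
    pre v n <+: z := by
  obtain ⟨j, hj, rfl⟩ := hz
  exact pre_prefix_flipPrefix v hj

theorem pre_succ_eq_flipPrefix {u : ℕ → Bool} {j : ℕ} (hj : pre u j = pre v j)
    (hne : u j ≠ v j) : pre u (j + 1) = flipPrefix v j := by
  rw [pre_succ, hj, flipPrefix, Bool.eq_not.mpr hne]

/-- `j` is the first position where `u` and `v` differ. -/
theorem exists_pre_succ_eq_flipPrefix {u : ℕ → Bool} {n k : ℕ} (hn : pre u n = pre v n)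
    (hk : u k ≠ v k) : ∃ j, n ≤ j ∧ j ≤ k ∧ pre u (j + 1) = flipPrefix v j := by
  classical
  have hex : ∃ i, u i ≠ v i := ⟨k, hk⟩
  have hagree : ∀ i < Nat.find hex, u i = v i := fun i hi => not_not.mp (Nat.find_min hex hi)
  refine ⟨Nat.find hex, ?_, Nat.find_min' hex hk,
    pre_succ_eq_flipPrefix v ((pre_eq_pre_iff u).mpr hagree) (Nat.find_spec hex)⟩
  by_contra! hlt
  exact Nat.find_spec hex ((pre_eq_pre_iff u).mp hn _ hlt)

theorem ends_detours (n : ℕ) : ends (detours v n) = {u | pre u n = pre v n} \ {v} := by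
  ext u
  simp only [mem_ends_iff, detours, Set.mem_image, Set.mem_Ici, Set.mem_sdiff,
    Set.mem_ofPred_eq, Set.mem_singleton_iff]
  constructor
  · rintro ⟨_, ⟨j, hj, rfl⟩, hu⟩
    rw [length_flipPrefix] at hu
    refine ⟨?_, ?_⟩
    · simpa using pre_eq_of_prefix u (pre_prefix_flipPrefix v hj) (by simpa using hu)
    · intro huv
      rw [huv] at hu
      exact flipPrefix_not_prefix_pre v j (j + 1) (hu ▸ List.prefix_rfl)
  · rintro ⟨hn, huv⟩
    obtain ⟨k, hk⟩ := Function.ne_iff.mp huv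
    obtain ⟨j, hj, -, hu⟩ := exists_pre_succ_eq_flipPrefix v hn hk
    exact ⟨_, ⟨j, hj, rfl⟩, by rw [length_flipPrefix, hu]⟩

theorem exists_append_mem_RI_detours {n : ℕ} {w : W} (hw : pre v n <+: w) :
    ∃ s, w ++ s ∈ RI (detours v n) := by
  set b := !v w.length
  set u : ℕ → Bool := wcat (w ++ [b]) v
  have hwb : pre u (w ++ [b]).length = w ++ [b] := exists_eq_wcat_iff.mp ⟨v, rfl⟩
  have hn : pre u n = pre v n := by
    simpa using pre_eq_of_prefix u (hw.trans (List.prefix_append w [b])) hwb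
  have hk : u w.length ≠ v w.length := by
    simp [u, b, wcat]
  obtain ⟨j, hj, hjw, hu⟩ := exists_pre_succ_eq_flipPrefix v hn hk
  refine ⟨[b], mem_RI_iff.mpr ⟨flipPrefix v j, ⟨j, hj, rfl⟩, ?_⟩⟩
  rw [← hu, ← hwb]
  exact pre_prefix_pre u (by simp; omega)

end Detours

theorem ends_diff_union_detours {P : Set W} (hP : isPrefixCode P) {v : ℕ → Bool} {n : ℕ}
    (hn : pre v n ∈ P) : ends (P \ {pre v n} ∪ detours v n) = ends P \ {v} := by
  have hv : v ∉ ends (P \ {pre v n}) := by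
    rw [mem_ends_iff]
    rintro ⟨y, ⟨hyP, hyn⟩, hy⟩
    exact hyn (hP.eq_of_pre_eq hyP hn hy (by rw [length_pre]))
  conv_rhs => rw [← Set.sdiff_union_of_subset (Set.singleton_subset_iff.mpr hn)]
  rw [ends_union, ends_union, ends_detours, ends_singleton, length_pre,
    Set.union_sdiff_distrib, Set.sdiff_singleton_eq_self hv]

/-- removing one end from a prefix code, preserving end-equivalence. -/
theorem puncture_prefixCode (P : Set W) (hP : isPrefixCode P)
    (v : ℕ → Bool) (hv : v ∈ ends P) :
    ∃ Q : Set W, isPrefixCode Q ∧ ends Q = ends P \ {v} ∧ endEquiv Q P := by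
  obtain ⟨x, hxP, hvx⟩ := mem_ends_iff.mp hv
  rw [← hvx] at hxP
  exact ⟨P \ {pre v x.length} ∪ detours v x.length,
    hP.diff_union hxP (isPrefixCode_detours v _) (fun _ => pre_prefix_of_mem_detours v),
    ends_diff_union_detours hP hxP,
    endEquiv_diff_union hxP (fun _ => pre_prefix_of_mem_detours v)
      (fun _ => exists_append_mem_RI_detours v)⟩
end

section
/- If f and g are right-ideal morphisms of A* with g ≡_end f, and f is injective, then g is injective. -/
open List

/-- injectiveness is preserved under end-equivalence. -/
theorem injective_of_endEquiv (f g : W → Option W) (hf : isRIM f) (hg : isRIM g)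
    (h : endEquivF g f)
    (hinj : ∀ x₁ x₂ y : W, f x₁ = some y → f x₂ = some y → x₁ = x₂) :
    ∀ x₁ x₂ y : W, g x₁ = some y → g x₂ = some y → x₁ = x₂ := by
  intro x₁ x₂ y h1 h2
  -- RI (Dom f) ⊆ Dom f since f is a right-ideal morphism
  have hRIf : RI (Dom f) ⊆ Dom f := by
    rintro v ⟨x, hx, w, rfl⟩
    obtain ⟨z, hz⟩ := Option.ne_none_iff_exists'.mp hx
    simp only [Dom, Set.mem_setOf_eq, hf x z hz w]
    simp
  have hRIg : RI (Dom g) ⊆ Dom g := by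
    rintro v ⟨x, hx, w, rfl⟩
    obtain ⟨z, hz⟩ := Option.ne_none_iff_exists'.mp hx
    simp only [Dom, Set.mem_setOf_eq, hg x z hz w]
    simp
  have hDomf_ri : isRightIdeal (Dom f) := by
    intro x hx w
    exact hRIf ⟨x, hx, w, rfl⟩
  -- Step 1: find w₂ with x₂ ++ w₂ ∈ Dom f
  have hx₂g : x₂ ∈ Dom g := by simp [Dom, h2]
  have hx₁g : x₁ ∈ Dom g := by simp [Dom, h1]
  obtain ⟨v, hvS, hvF⟩ : ({v | ∃ w : W, v = x₂ ++ w} ∩ RI (Dom f)).Nonempty := by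
    refine (h.1 {v | ∃ w : W, v = x₂ ++ w} ?_).mp ⟨x₂, ⟨[], by simp⟩, x₂, hx₂g, [], by simp⟩
    rintro v ⟨w, rfl⟩ w'
    exact ⟨w ++ w', by simp⟩
  obtain ⟨w₂, rfl⟩ := hvS
  have hx₂w₂ : x₂ ++ w₂ ∈ Dom f := hRIf hvF
  -- Step 2: the right ideal R of common extensions
  obtain ⟨u, huR, huF⟩ :
      ({v | ∃ w : W, v = x₁ ++ w ∧ x₂ ++ w ∈ Dom f} ∩ RI (Dom f)).Nonempty := by
    refine (h.1 {v | ∃ w : W, v = x₁ ++ w ∧ x₂ ++ w ∈ Dom f} ?_).mp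
      ⟨x₁ ++ w₂, ⟨w₂, rfl, hx₂w₂⟩, x₁, hx₁g, w₂, rfl⟩
    rintro v ⟨w, rfl, hw⟩ w'
    exact ⟨w ++ w', by simp, by simpa [List.append_assoc] using hDomf_ri _ hw w'⟩
  obtain ⟨w, rfl, hx₂w⟩ := huR
  have hx₁w : x₁ ++ w ∈ Dom f := hRIf huF
  -- Step 3: transfer to f via agreement
  have hg1 : g (x₁ ++ w) = some (y ++ w) := hg x₁ y h1 w
  have hg2 : g (x₂ ++ w) = some (y ++ w) := hg x₂ y h2 w
  have hf1 : f (x₁ ++ w) = some (y ++ w) := by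
    rw [← h.2 (x₁ ++ w) (by simp [Dom, hg1]) hx₁w]; exact hg1
  have hf2 : f (x₂ ++ w) = some (y ++ w) := by
    rw [← h.2 (x₂ ++ w) (by simp [Dom, hg2]) hx₂w]; exact hg2
  have := hinj _ _ _ hf1 hf2
  exact List.append_cancel_right this
end

section
/- Let f₁, f₂ be right-ideal morphisms of A* with f₁ ≡_end f₂, and let x ∈ Dom(f₁). Then there exists v ∈ A* such that xvA* ⊆ Dom(f₂) and f₂(xvw) = f₁(xvw) for all w ∈ A*. -/
open List

/-- for end-equivalent right-ideal morphisms, every point of Dom(f₁)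
    has an extension into a common monogenic right ideal where the two agree. -/
theorem longEnough (f₁ f₂ : W → Option W) (h₁ : isRIM f₁) (h₂ : isRIM f₂)
    (h : endEquivF f₁ f₂) (x : W) (hx : x ∈ Dom f₁) :
    ∃ v : W, (∀ w : W, (x ++ v) ++ w ∈ Dom f₂) ∧
      (∀ w : W, f₂ ((x ++ v) ++ w) = f₁ ((x ++ v) ++ w)) := by
  have domRI : ∀ (f : W → Option W), isRIM f → ∀ z ∈ Dom f, ∀ w : W, z ++ w ∈ Dom f := by
    intro f hf z hz w
    obtain ⟨y, hy⟩ := Option.ne_none_iff_exists'.mp hz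
    simp [Dom, hf z y hy w]
  have hR : isRightIdeal {y : W | x <+: y} := by
    intro y hy w
    exact hy.trans (List.prefix_append y w)
  have hne : ({y : W | x <+: y} ∩ RI (Dom f₁)).Nonempty :=
    ⟨x, List.prefix_refl x, ⟨x, hx, [], (List.append_nil x).symm⟩⟩
  obtain ⟨y, hyR, d, hd, w', hyw⟩ := (h.1 _ hR).mp hne
  obtain ⟨v, hv⟩ := hyR
  have hy2 : y ∈ Dom f₂ := hyw ▸ domRI f₂ h₂ d hd w'
  refine ⟨v, ?_, ?_⟩
  · intro w
    exact hv ▸ domRI f₂ h₂ y hy2 w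
  · intro w
    have hd1 : (x ++ v) ++ w ∈ Dom f₁ := domRI f₁ h₁ x hx (v ++ w) |>.imp (by simp [List.append_assoc])
    have hd2 : (x ++ v) ++ w ∈ Dom f₂ := hv ▸ domRI f₂ h₂ y hy2 w
    exact (h.2 _ hd1 hd2).symm
end

section
/- End-equivalence ≡_end is a congruence on the monoid of right-ideal morphisms of A* under composition: if f₁ ≡_end f₂ then f₁∘g ≡_end f₂∘g and g∘f₁ ≡_end g∘f₂ for every right-ideal morphism g. -/
open List

lemma dom_rightIdeal {f : W → Option W} (hf : isRIM f) : isRightIdeal (Dom f) := by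
  intro x hx w
  simp only [Dom, Set.mem_setOf_eq] at hx ⊢
  cases hy : f x with
  | none => exact absurd hy hx
  | some y => rw [hf x y hy w]; simp

lemma cofinal_of_endEquiv {S₁ S₂ : Set W} (h2 : isRightIdeal S₂)
    (h : endEquiv S₁ S₂) {x : W} (hx : x ∈ S₁) : ∃ w, x ++ w ∈ S₂ := by
  have hid : isRightIdeal (RI {x}) := by
    rintro z ⟨x', hx', w', rfl⟩ w
    exact ⟨x', hx', w' ++ w, by simp⟩
  have := (h (RI {x}) hid).mp ⟨x, mem_RI_self rfl, mem_RI_self hx⟩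
  obtain ⟨z, hz1, hz2⟩ := this
  obtain ⟨x', hx', w, rfl⟩ := hz1
  simp only [Set.mem_singleton_iff] at hx'
  subst hx'
  obtain ⟨s, hs, w', hw'⟩ := hz2
  exact ⟨w, by rw [hw']; exact h2 s hs w'⟩

lemma endEquiv_of_cofinal {S₁ S₂ : Set W} (h1 : isRightIdeal S₁) (h2 : isRightIdeal S₂)
    (c12 : ∀ x ∈ S₁, ∃ w, x ++ w ∈ S₂) (c21 : ∀ x ∈ S₂, ∃ w, x ++ w ∈ S₁) :
    endEquiv S₁ S₂ := by
  intro R hR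
  constructor
  · rintro ⟨z, hzR, x, hx, w, rfl⟩
    obtain ⟨w', hw'⟩ := c12 _ (h1 x hx w)
    exact ⟨x ++ w ++ w', hR _ hzR w', mem_RI_self hw'⟩
  · rintro ⟨z, hzR, x, hx, w, rfl⟩
    obtain ⟨w', hw'⟩ := c21 _ (h2 x hx w)
    exact ⟨x ++ w ++ w', hR _ hzR w', mem_RI_self hw'⟩

lemma pcomp_RIM {f g : W → Option W} (hf : isRIM f) (hg : isRIM g) :
    isRIM (pcomp f g) := by
  intro x z hz w
  simp only [pcomp] at hz ⊢
  cases hy : g x with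
  | none => rw [hy] at hz; simp at hz
  | some y =>
    rw [hy] at hz
    simp only [Option.bind_some] at hz
    rw [hg x y hy w]
    simpa using hf y z hz w

lemma mem_dom_pcomp {f g : W → Option W} {x : W} :
    x ∈ Dom (pcomp f g) ↔ ∃ y z, g x = some y ∧ f y = some z := by
  simp only [Dom, pcomp, Set.mem_setOf_eq]
  cases hy : g x with
  | none => simp
  | some y =>
    simp only [Option.bind_some]
    cases hz : f y with
    | none => simp [hz]
    | some z =>
      simp only [ne_eq, reduceCtorEq, not_false_eq_true, true_iff]
      exact ⟨y, z, rfl, hz⟩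

lemma mem_dom_iff {f : W → Option W} {x : W} :
    x ∈ Dom f ↔ ∃ y, f x = some y := by
  simp only [Dom, Set.mem_setOf_eq]
  cases h : f x <;> simp

/-- ≡_end is a congruence on right-ideal morphisms under composition. -/
theorem endEquiv_congruence (f₁ f₂ g : W → Option W)
    (h₁ : isRIM f₁) (h₂ : isRIM f₂) (hg : isRIM g)
    (h : endEquivF f₁ f₂) :
    endEquivF (pcomp f₁ g) (pcomp f₂ g) ∧ endEquivF (pcomp g f₁) (pcomp g f₂) := by
  have heq : endEquiv (Dom f₁) (Dom f₂) := h.1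
  have heq' : endEquiv (Dom f₂) (Dom f₁) := fun R hR => (heq R hR).symm
  have c12 : ∀ x ∈ Dom f₁, ∃ w, x ++ w ∈ Dom f₂ :=
    fun x hx => cofinal_of_endEquiv (dom_rightIdeal h₂) heq hx
  have c21 : ∀ x ∈ Dom f₂, ∃ w, x ++ w ∈ Dom f₁ :=
    fun x hx => cofinal_of_endEquiv (dom_rightIdeal h₁) heq' hx
  constructor
  · constructor
    · apply endEquiv_of_cofinal (dom_rightIdeal (pcomp_RIM h₁ hg))
        (dom_rightIdeal (pcomp_RIM h₂ hg))
      · intro x hx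
        obtain ⟨y, z, hy, hz⟩ := mem_dom_pcomp.mp hx
        obtain ⟨w, hw⟩ := c12 y (mem_dom_iff.mpr ⟨z, hz⟩)
        obtain ⟨z', hz'⟩ := mem_dom_iff.mp hw
        exact ⟨w, mem_dom_pcomp.mpr ⟨y ++ w, z', hg x y hy w, hz'⟩⟩
      · intro x hx
        obtain ⟨y, z, hy, hz⟩ := mem_dom_pcomp.mp hx
        obtain ⟨w, hw⟩ := c21 y (mem_dom_iff.mpr ⟨z, hz⟩)
        obtain ⟨z', hz'⟩ := mem_dom_iff.mp hw
        exact ⟨w, mem_dom_pcomp.mpr ⟨y ++ w, z', hg x y hy w, hz'⟩⟩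
    · intro x hx1 hx2
      obtain ⟨y, z, hy, hz⟩ := mem_dom_pcomp.mp hx1
      obtain ⟨y', z', hy', hz'⟩ := mem_dom_pcomp.mp hx2
      rw [hy] at hy'
      obtain rfl := Option.some_injective _ hy'
      have : f₁ y = f₂ y := h.2 y (mem_dom_iff.mpr ⟨z, hz⟩) (mem_dom_iff.mpr ⟨z', hz'⟩)
      simp [pcomp, hy, this]
  · constructor
    · apply endEquiv_of_cofinal (dom_rightIdeal (pcomp_RIM hg h₁))
        (dom_rightIdeal (pcomp_RIM hg h₂))
      · intro x hx
        obtain ⟨y, z, hy, hz⟩ := mem_dom_pcomp.mp hx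
        obtain ⟨w, hw⟩ := c12 x (mem_dom_iff.mpr ⟨y, hy⟩)
        have hf1 : f₁ (x ++ w) = some (y ++ w) := h₁ x y hy w
        have hf2 : f₂ (x ++ w) = some (y ++ w) := by
          rw [← h.2 (x ++ w) (mem_dom_iff.mpr ⟨y ++ w, hf1⟩) hw]; exact hf1
        exact ⟨w, mem_dom_pcomp.mpr ⟨y ++ w, z ++ w, hf2, hg y z hz w⟩⟩
      · intro x hx
        obtain ⟨y, z, hy, hz⟩ := mem_dom_pcomp.mp hx
        obtain ⟨w, hw⟩ := c21 x (mem_dom_iff.mpr ⟨y, hy⟩)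
        have hf2 : f₂ (x ++ w) = some (y ++ w) := h₂ x y hy w
        have hf1 : f₁ (x ++ w) = some (y ++ w) := by
          rw [h.2 (x ++ w) hw (mem_dom_iff.mpr ⟨y ++ w, hf2⟩)]; exact hf2
        exact ⟨w, mem_dom_pcomp.mpr ⟨y ++ w, z ++ w, hf1, hg y z hz w⟩⟩
    · intro x hx1 hx2
      obtain ⟨y, z, hy, hz⟩ := mem_dom_pcomp.mp hx1
      obtain ⟨y', z', hy', hz'⟩ := mem_dom_pcomp.mp hx2
      have : f₁ x = f₂ x := h.2 x (mem_dom_iff.mpr ⟨y, hy⟩) (mem_dom_iff.mpr ⟨y', hy'⟩)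
      simp [pcomp, this]
end

section
/- Let f be a right-ideal morphism of A*, g a right-ideal morphism with f ⊆ g (g extends f) and f ≡_bd g. Then for every x ∈ domC(g), the set xA* ∩ domC(f) is finite. -/
open List

/-- if g extends f and f ≡_bd g, then for every x ∈ domC(g),
    xA* ∩ domC(f) is finite. -/
theorem finite_fibers_of_bdEquiv (f g : W → Option W)
    (hf : isRIM f) (hg : isRIM g) (hsub : sub f g) (h : bdEquivF f g) :
    ∀ x ∈ domC g, {z : W | z ∈ domC f ∧ x <+: z}.Finite := by
  intro x hx
  obtain ⟨⟨_, β, hβ⟩, _⟩ := h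
  apply (List.finite_length_le Bool (β x.length)).subset
  rintro z ⟨hz, hxz⟩
  exact (hβ z hz x hx (Or.inr hxz)).1
end

section
/- If P, Q ⊂ A* are prefix codes with P ≡_bd Q and P is finite, then Q is finite. -/
open List

/-- bounded end-equivalence preserves finiteness of prefix codes. -/
theorem finite_of_bdEquiv (P Q : Set W)
    (hP : isPrefixCode P) (hQ : isPrefixCode Q)
    (h : bdSets P Q) (hfin : P.Finite) : Q.Finite := by
  obtain ⟨hend, β, hβ⟩ := h
  set N : ℕ := hfin.toFinset.sup (fun p => β p.length) with hN
  apply Set.Finite.subset (List.finite_length_le Bool N)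
  intro q hq
  -- q is prefix-comparable with some p ∈ P
  have hRI : isRightIdeal (RI {q}) := by
    rintro y ⟨x, hx, w, rfl⟩ w'
    exact ⟨x, hx, w ++ w', by simp⟩
  have hne : (RI {q} ∩ RI Q).Nonempty := ⟨q, ⟨q, rfl, [], by simp⟩, ⟨q, hq, [], by simp⟩⟩
  obtain ⟨y, ⟨q', hq', w, hyw⟩, p, hp, w', hyw'⟩ := (hend (RI {q}) hRI).mpr hne
  rw [Set.mem_singleton_iff] at hq'; rw [hq'] at hyw
  have hcmp : pc p q := by
    have h1 : q <+: y := ⟨w, hyw.symm⟩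
    have h2 : p <+: y := ⟨w', hyw'.symm⟩
    exact List.prefix_or_prefix_of_prefix h2 h1
  have := (hβ p hp q hq hcmp).2
  calc q.length ≤ β p.length := this
    _ ≤ N := Finset.le_sup (f := fun p => β p.length) (hfin.mem_toFinset.mpr hp)
end

section
/- Two right-ideal morphisms f, g of A* induce the same partial action on the Cantor space A^ω if and only if g ≡_bd f. (The action is defined by f(pw) = f(p)·w for p ∈ domC(f), w ∈ A^ω, with domain domC(f)·A^ω.) -/
open List

/-- The partial action of a right-ideal morphism on the Cantor space A^ω,
    as a relation: `actRel f u v` iff u = p·w with p ∈ domC(f) and v = f(p)·w. -/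
def actRel (f : W → Option W) (u v : ℕ → Bool) : Prop :=
  ∃ p y : W, ∃ w : ℕ → Bool, p ∈ domC f ∧ f p = some y ∧ u = wcat p w ∧ v = wcat y w

/-- the length-`n` prefix of an infinite word -/
def pref (u : ℕ → Bool) (n : ℕ) : W := List.ofFn (fun i : Fin n => u i)

@[simp] lemma pref_length (u : ℕ → Bool) (n : ℕ) : (pref u n).length = n := by
  simp [pref]

lemma pref_get (u : ℕ → Bool) (n i : ℕ) (h : i < n) :
    (pref u n).get ⟨i, by simpa using h⟩ = u i := by simp [pref]

lemma pref_prefix (u : ℕ → Bool) {m n : ℕ} (h : m ≤ n) : pref u m <+: pref u n := by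
  refine ⟨List.ofFn (fun i : Fin (n - m) => u (m + i)), ?_⟩
  apply List.ext_getElem
  · simp; omega
  · intro i h1 h2
    simp only [pref] at *
    rcases lt_or_ge i m with hi | hi
    · rw [List.getElem_append_left (by simpa using hi)]; simp
    · rw [List.getElem_append_right (by simpa using hi)]
      simp; congr 1; omega

lemma wcat_eval_lt (x : W) (w : ℕ → Bool) {i : ℕ} (h : i < x.length) :
    wcat x w i = x.get ⟨i, h⟩ := by simp [wcat, h]

lemma wcat_eval_ge (x : W) (w : ℕ → Bool) {i : ℕ} (h : x.length ≤ i) :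
    wcat x w i = w (i - x.length) := by
  simp [wcat]; intro h'; omega

lemma wcat_eval_add (x : W) (w : ℕ → Bool) (i : ℕ) :
    wcat x w (x.length + i) = w i := by
  rw [wcat_eval_ge x w (by omega)]; congr 1; omega

lemma pref_wcat (x : W) (w : ℕ → Bool) : pref (wcat x w) x.length = x := by
  apply List.ext_get (by simp)
  intro i h1 h2
  rw [pref_get _ _ _ (by simpa using h1), wcat_eval_lt x w h2]

lemma pref_wcat_prefix (x : W) (w : ℕ → Bool) {n : ℕ} (h : n ≤ x.length) :
    pref (wcat x w) n <+: x := by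
  conv_rhs => rw [← pref_wcat x w]
  exact pref_prefix _ h

lemma eq_wcat_pref (u : ℕ → Bool) (n : ℕ) : u = wcat (pref u n) (fun i => u (n + i)) := by
  funext i
  rcases lt_or_ge i n with h | h
  · rw [wcat_eval_lt _ _ (by simpa using h), pref_get u n i h]
  · rw [wcat_eval_ge _ _ (by simpa using h)]
    simp; congr 1; omega

lemma prefix_iff_wcat {x : W} {u : ℕ → Bool} :
    (∃ w, u = wcat x w) ↔ pref u x.length = x := by
  constructor
  · rintro ⟨w, rfl⟩; exact pref_wcat x w
  · intro h; exact ⟨fun i => u (x.length + i), by conv_lhs => rw [eq_wcat_pref u x.length, h]⟩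

lemma wcat_append (x y : W) (w : ℕ → Bool) : wcat (x ++ y) w = wcat x (wcat y w) := by
  funext i
  rcases lt_or_ge i x.length with h | h
  · rw [wcat_eval_lt _ _ (show i < (x++y).length by simp; omega), wcat_eval_lt _ _ h]
    simp [List.getElem_append_left h]
  · rw [wcat_eval_ge _ _ h]
    rcases lt_or_ge i (x.length + y.length) with h2 | h2
    · rw [wcat_eval_lt _ _ (show i < (x++y).length by simpa using h2),
        wcat_eval_lt _ _ (show i - x.length < y.length by omega)]
      simp [List.getElem_append_right h]
    · rw [wcat_eval_ge _ _ (show (x++y).length ≤ i by simpa using h2),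
        wcat_eval_ge _ _ (show y.length ≤ i - x.length by omega)]
      congr 1; simp; omega

lemma wcat_right_inj {x : W} {w w' : ℕ → Bool} (h : wcat x w = wcat x w') : w = w' := by
  funext i
  have := congrFun h (x.length + i)
  rwa [wcat_eval_add, wcat_eval_add] at this

lemma pc_of_wcat_eq {x y : W} {w w' : ℕ → Bool} (h : wcat x w = wcat y w') : pc x y := by
  rcases le_or_gt x.length y.length with hl | hl
  · left
    have := pref_prefix (wcat x w) hl
    rwa [pref_wcat, h, pref_wcat] at this
  · right
    have := pref_prefix (wcat x w) hl.le
    rwa [pref_wcat, h, pref_wcat] at this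

lemma prefC_isPrefixCode (S : Set W) : isPrefixCode (prefC S) := by
  intro x hx y hy hxy
  by_contra hne
  exact hy.2 x hxy hne hx.1

lemma exists_domC_prefix {f : W → Option W} {x : W} (hx : x ∈ Dom f) :
    ∃ p ∈ domC f, p <+: x := by
  classical
  have hex : ∃ n, x.take n ∈ Dom f := ⟨x.length, by simpa using hx⟩
  set n := Nat.find hex with hn
  have hmem : x.take n ∈ Dom f := Nat.find_spec hex
  have hmin : ∀ m, m < n → x.take m ∉ Dom f := fun m hm => Nat.find_min hex hm
  have hnle : n ≤ x.length := by
    by_contra hc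
    push_neg at hc
    exact hmin x.length hc (by simpa using hx)
  refine ⟨x.take n, ⟨hmem, ?_⟩, List.take_prefix n x⟩
  intro p hp hne hpS
  have hple : p.length ≤ n := by simpa [hnle] using hp.length_le
  have hpeq : p = x.take p.length := by
    have h2 : p <+: x := hp.trans (List.take_prefix n x)
    exact List.prefix_iff_eq_take.mp h2
  have hplt : p.length < n := by
    rcases lt_or_eq_of_le hple with h | h
    · exact h
    · exfalso; apply hne
      rw [hpeq, h]
  exact hmin p.length hplt (by rwa [← hpeq])

lemma RI_domC {f : W → Option W} (hf : isRIM f) : RI (domC f) = Dom f := by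
  ext x
  constructor
  · rintro ⟨p, hp, w, rfl⟩
    exact dom_rightIdeal hf p hp.1 w
  · intro hx
    obtain ⟨p, hp, ⟨w, rfl⟩⟩ := exists_domC_prefix hx
    exact ⟨p, hp, w, rfl⟩

lemma prefix_mem_RI {L : Set W} {x y : W} (hx : x ∈ L) (hxy : x <+: y) : y ∈ RI L := by
  obtain ⟨c, rfl⟩ := hxy; exact ⟨x, hx, c, rfl⟩

lemma RI_of_rightIdeal {S : Set W} (hS : isRightIdeal S) : RI S = S := by
  ext x
  constructor
  · rintro ⟨a, ha, w, rfl⟩; exact hS a ha w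
  · intro hx; exact mem_RI_self hx

lemma endEquiv_congr {L₁ L₁' L₂ L₂' : Set W} (h1 : RI L₁ = RI L₁') (h2 : RI L₂ = RI L₂') :
    endEquiv L₁ L₂ ↔ endEquiv L₁' L₂' := by
  unfold endEquiv; rw [h1, h2]

/-- the easy half: ends inclusion gives the end-equivalence implication -/
lemma endHalf {P Q : Set W} (h : ends P ⊆ ends Q) :
    ∀ R : Set W, isRightIdeal R → (R ∩ RI P).Nonempty → (R ∩ RI Q).Nonempty := by
  rintro R hR ⟨r, hrR, p, hp, s, rfl⟩
  set r := p ++ s with hr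
  have hu : wcat r (fun _ => false) ∈ ends P :=
    ⟨p, hp, wcat s (fun _ => false), by rw [hr, wcat_append]⟩
  obtain ⟨q, hq, w', hw'⟩ := h hu
  rcases le_or_gt q.length r.length with hl | hl
  · have : q <+: r := by
      have h1 : pref (wcat r fun _ => false) q.length = q := by rw [hw', pref_wcat]
      rw [← h1]; exact pref_wcat_prefix _ _ hl
    exact ⟨r, hrR, prefix_mem_RI hq this⟩
  · have : r <+: q := by
      have h1 : pref (wcat q w') r.length = r := by rw [← hw', pref_wcat]
      rw [← h1]; exact pref_wcat_prefix _ _ hl.le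
    obtain ⟨c, hc⟩ := this
    exact ⟨q, by rw [← hc]; exact hR r hrR c, mem_RI_self hq⟩

/-- prefixes of `u` of comparable lengths are prefixes of each other -/
lemma pref_eq_of_prefix {u : ℕ → Bool} {q : W} {n : ℕ} (h : q <+: pref u n) :
    pref u q.length = q := by
  have h1 : pref u q.length <+: pref u n := pref_prefix u (by simpa using h.length_le)
  have h2 : pref u q.length <+: q :=
    List.prefix_of_prefix_length_le h1 h (by simp)
  exact h2.eq_of_length (by simp)

/-- bounded end-equivalence implies ends inclusion -/
lemma ends_subset_of_bd {P Q : Set W} (hE : endEquiv P Q) (β : ℕ → ℕ)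
    (hβ : ∀ x₁ ∈ P, ∀ x₂ ∈ Q, pc x₁ x₂ → x₂.length ≤ β x₁.length) :
    ends P ⊆ ends Q := by
  rintro u ⟨p, hp, w, rfl⟩
  set u := wcat p w with hu
  set N := max p.length (β p.length) with hN
  set r := pref u N with hrdef
  have hpr : p <+: r := by
    have : pref u p.length = p := by rw [hu, pref_wcat]
    rw [← this, hrdef]; exact pref_prefix u (by omega)
  have hne : (RI {r} ∩ RI P).Nonempty :=
    ⟨r, mem_RI_self rfl, prefix_mem_RI hp hpr⟩
  obtain ⟨z, hzR, hzQ⟩ := (hE (RI {r}) (RI_rightIdeal _)).mp hne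
  obtain ⟨r', hr', s, rfl⟩ := hzR
  rw [Set.mem_singleton_iff] at hr'
  subst hr'
  obtain ⟨q, hq, t, hqt⟩ := hzQ
  have hpz : p <+: r ++ s := hpr.trans ⟨s, rfl⟩
  have hqz : q <+: r ++ s := ⟨t, hqt.symm⟩
  have hor := List.prefix_or_prefix_of_prefix hpz hqz
  have hqlen : q.length ≤ β p.length := hβ p hp q hq hor
  have hqr : q <+: r := List.prefix_of_prefix_length_le hqz ⟨s, rfl⟩ (by
    have : r.length = N := by rw [hrdef]; simp
    omega)
  have hpq : pref u q.length = q := pref_eq_of_prefix (n := N) (by rwa [← hrdef])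
  obtain ⟨w'', hw''⟩ := prefix_iff_wcat.mpr hpq
  exact ⟨q, hq, w'', hw''⟩

lemma pref_congr {u u' : ℕ → Bool} {m : ℕ} (h : ∀ i < m, u i = u' i) :
    pref u m = pref u' m := by
  simp only [pref]
  congr 1
  funext i
  exact h i i.isLt

/-- per-word bound via compactness of Cantor space -/
lemma word_bound {P Q : Set W} (hQ : isPrefixCode Q) (h : ends P ⊆ ends Q)
    (x₁ : W) (hx₁ : x₁ ∈ P) :
    ∃ b : ℕ, ∀ x₂ ∈ Q, pc x₁ x₂ → x₂.length ≤ b := by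
  by_cases hcase : ∃ q ∈ Q, q <+: x₁
  · obtain ⟨q, hqQ, hq⟩ := hcase
    refine ⟨x₁.length, fun x₂ hx₂ hpc => ?_⟩
    rcases hpc with hpc | hpc
    · have : q <+: x₂ := hq.trans hpc
      rw [← hQ q hqQ x₂ hx₂ this]
      exact hq.length_le
    · exact hpc.length_le
  · push_neg at hcase
    by_contra hb
    push_neg at hb
    -- for each k there is x₂ ∈ Q with x₁ <+: x₂ and |x₂| > |x₁| + k
    have hlong : ∀ k : ℕ, ∃ x₂ ∈ Q, x₁ <+: x₂ ∧ x₁.length + k < x₂.length := by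
      intro k
      obtain ⟨x₂, hx₂, hpc, hlen⟩ := hb (x₁.length + k)
      refine ⟨x₂, hx₂, ?_, hlen⟩
      rcases hpc with hpc | hpc
      · exact hpc
      · exact absurd hpc.length_le (by omega)
    classical
    set C : ℕ → Set (ℕ → Bool) :=
      fun k => {u | pref u x₁.length = x₁ ∧ ∀ m ≤ x₁.length + k, pref u m ∉ Q} with hC
    have hmono : ∀ k, C (k + 1) ⊆ C k := by
      rintro k u ⟨h1, h2⟩
      exact ⟨h1, fun m hm => h2 m (by omega)⟩
    have hnon : ∀ k, (C k).Nonempty := by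
      intro k
      obtain ⟨x₂, hx₂Q, ⟨c, rfl⟩, hlen⟩ := hlong k
      refine ⟨wcat (x₁ ++ c) (fun _ => false), ?_, ?_⟩
      · rw [wcat_append, pref_wcat]
      · intro m hm hmQ
        have hmlt : m < (x₁ ++ c).length := by omega
        have hpre : pref (wcat (x₁ ++ c) fun _ => false) m <+: x₁ ++ c :=
          pref_wcat_prefix _ _ hmlt.le
        have := hQ _ hmQ _ hx₂Q hpre
        have hlen2 := congrArg List.length this
        simp only [List.length_append, pref_length] at hlen2 hlen hmlt
        omega
    have hclosed : ∀ k, IsClosed (C k) := by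
      intro k
      set N := x₁.length + k + 1 with hN
      set π : (ℕ → Bool) → (Fin N → Bool) := fun u i => u i with hπ
      have hCk : C k = π ⁻¹' (π '' C k) := by
        apply subset_antisymm (Set.subset_preimage_image π (C k))
        rintro u ⟨u', hu', hπeq⟩
        have hcoord : ∀ i < N, u' i = u i := fun i hi => congrFun hπeq ⟨i, hi⟩
        refine ⟨?_, ?_⟩
        · rw [pref_congr (m := x₁.length) (fun i hi => (hcoord i (by omega)).symm)]
          exact hu'.1
        · intro m hm
          rw [pref_congr (fun i hi => (hcoord i (by omega)).symm)]
          exact hu'.2 m hm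
      rw [hCk]
      exact (isClosed_discrete _).preimage (continuous_pi fun i => continuous_apply _)
    obtain ⟨u, hu⟩ := IsCompact.nonempty_iInter_of_sequence_nonempty_isCompact_isClosed
      C hmono hnon ((hclosed 0).isCompact) hclosed
    simp only [Set.mem_iInter] at hu
    have huP : u ∈ ends P := by
      refine ⟨x₁, hx₁, ?_⟩
      exact prefix_iff_wcat.mpr (hu 0).1
    obtain ⟨q, hqQ, w', hw'⟩ := h huP
    have : pref u q.length = q := by rw [hw', pref_wcat]
    exact (hu q.length).2 q.length (by omega) (by rwa [this])

/-- ends inclusion gives a global bound -/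
lemma bound_of_ends_subset {P Q : Set W} (hQ : isPrefixCode Q) (h : ends P ⊆ ends Q) :
    ∃ β : ℕ → ℕ, ∀ x₁ ∈ P, ∀ x₂ ∈ Q, pc x₁ x₂ → x₂.length ≤ β x₁.length := by
  classical
  have hball : ∀ x₁ : W, ∃ b : ℕ, ∀ x₂ ∈ Q, x₁ ∈ P → pc x₁ x₂ → x₂.length ≤ b := by
    intro x₁
    by_cases hx₁ : x₁ ∈ P
    · obtain ⟨b, hb⟩ := word_bound hQ h x₁ hx₁
      exact ⟨b, fun x₂ h2 _ hpc => hb x₂ h2 hpc⟩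
    · exact ⟨0, fun _ _ hx _ => absurd hx hx₁⟩
  choose b hb using hball
  refine ⟨fun n => Finset.univ.sup (fun v : Fin n → Bool => b (List.ofFn v)),
    fun x₁ hx₁ x₂ hx₂ hpc => ?_⟩
  have h1 : x₂.length ≤ b x₁ := hb x₁ x₂ hx₂ hx₁ hpc
  have h2 : b x₁ ≤ Finset.univ.sup (fun v : Fin x₁.length → Bool => b (List.ofFn v)) := by
    have h3 := Finset.le_sup (f := fun v : Fin x₁.length → Bool => b (List.ofFn v))
      (Finset.mem_univ (fun i : Fin x₁.length => x₁.get i))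
    simpa [List.ofFn_get] using h3
  exact h1.trans h2

lemma wcat_cancel {a b : W} {w w' : ℕ → Bool} (h : wcat a w = wcat b w')
    (hl : a.length ≤ b.length) : ∃ e, b = a ++ e ∧ w = wcat e w' := by
  have hab : a <+: b := by
    have h1 : pref (wcat a w) a.length = a := pref_wcat a w
    have h2 : pref (wcat a w) b.length = b := by rw [h, pref_wcat]
    rw [← h1, ← h2]; exact pref_prefix _ hl
  obtain ⟨e, rfl⟩ := hab
  rw [wcat_append] at h
  exact ⟨e, rfl, wcat_right_inj h⟩

lemma eq_of_two_tails_aux {a b : W}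
    (h0 : wcat a (fun _ => false) = wcat b (fun _ => false))
    (h1 : wcat a (fun _ => true) = wcat b (fun _ => true))
    (hl : a.length ≤ b.length) : a = b := by
  obtain ⟨e, rfl, he0⟩ := wcat_cancel h0 hl
  obtain ⟨e', he', he1⟩ := wcat_cancel h1 hl
  have hee : e = e' := List.append_cancel_left he'
  subst hee
  cases e with
  | nil => simp
  | cons c t =>
    exfalso
    have hfa := congrFun he0 0
    have hta := congrFun he1 0
    rw [wcat_eval_lt _ _ (by simp : (0:ℕ) < (c :: t).length)] at hfa hta
    simp at hfa hta
    rw [hfa] at hta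
    exact Bool.false_ne_true hta

lemma eq_of_all_tails {a b : W} (h : ∀ ω : ℕ → Bool, wcat a ω = wcat b ω) : a = b := by
  rcases le_total a.length b.length with hl | hl
  · exact eq_of_two_tails_aux (h _) (h _) hl
  · exact (eq_of_two_tails_aux (h _).symm (h _).symm hl).symm

lemma mem_Dom_of_eq {f : W → Option W} {x y : W} (h : f x = some y) : x ∈ Dom f := by
  simp [Dom, h]

lemma act_mono {f g : W → Option W} (hf : isRIM f) (hg : isRIM g)
    (hends : ends (domC f) ⊆ ends (domC g))
    (hagree : ∀ x, x ∈ Dom f → x ∈ Dom g → f x = g x) :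
    ∀ u v, actRel f u v → actRel g u v := by
  rintro u v ⟨p, y, w, hp, hy, rfl, rfl⟩
  obtain ⟨q, hq, w', hw'⟩ := hends ⟨p, hp, w, rfl⟩
  obtain ⟨z, hz⟩ := Option.ne_none_iff_exists'.mp hq.1
  rcases pc_of_wcat_eq hw' with hpq | hqp
  · -- p <+: q
    obtain ⟨c, rfl⟩ := hpq
    have hfq : f (p ++ c) = some (y ++ c) := hf p y hy c
    have hgq : g (p ++ c) = some (y ++ c) := by
      rw [← hagree _ (mem_Dom_of_eq hfq) hq.1]; exact hfq
    have hww : w = wcat c w' := wcat_right_inj (by rwa [wcat_append] at hw')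
    exact ⟨p ++ c, y ++ c, w', hq, hgq, hw', by rw [hww, ← wcat_append]⟩
  · -- q <+: p
    obtain ⟨c, rfl⟩ := hqp
    have hgp : g (q ++ c) = some (z ++ c) := hg q z hz c
    have hyz : y = z ++ c := by
      have h2 := hagree _ (mem_Dom_of_eq hy) (mem_Dom_of_eq hgp)
      rw [hy, hgp] at h2
      exact Option.some.inj h2
    exact ⟨q, z, wcat c w, hq, hz, by rw [wcat_append], by rw [hyz, wcat_append]⟩

lemma agree_of_sameAction {f g : W → Option W} (hf : isRIM f) (hg : isRIM g)
    (hAct : ∀ u v, actRel f u v → actRel g u v) :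
    ∀ x, x ∈ Dom f → x ∈ Dom g → f x = g x := by
  intro x hxf hxg
  obtain ⟨p, hp, s, rfl⟩ := exists_domC_prefix hxf
  obtain ⟨y, hy⟩ := Option.ne_none_iff_exists'.mp hp.1
  obtain ⟨q, hq, t, hqt⟩ := exists_domC_prefix hxg
  obtain ⟨z, hz⟩ := Option.ne_none_iff_exists'.mp hq.1
  have hfx : f (p ++ s) = some (y ++ s) := hf p y hy s
  have hgx : g (p ++ s) = some (z ++ t) := by rw [← hqt]; exact hg q z hz t
  have key : ∀ ω : ℕ → Bool, wcat (y ++ s) ω = wcat (z ++ t) ω := by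
    intro ω
    have hA : actRel f (wcat (p ++ s) ω) (wcat (y ++ s) ω) :=
      ⟨p, y, wcat s ω, hp, hy, wcat_append p s ω, wcat_append y s ω⟩
    obtain ⟨q', z', w', hq', hz', huq, hvq⟩ := hAct _ _ hA
    have hu2 : wcat (p ++ s) ω = wcat q (wcat t ω) := by rw [← hqt, wcat_append]
    have hqq : q = q' := by
      rcases pc_of_wcat_eq (show wcat q (wcat t ω) = wcat q' w' by rw [← hu2, huq]) with h | h
      · exact prefC_isPrefixCode _ q hq q' hq' h
      · exact (prefC_isPrefixCode _ q' hq' q hq h).symm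
    obtain rfl := hqq
    have hw'eq : wcat t ω = w' := wcat_right_inj (by rw [← hu2, huq])
    have hz'eq : z = z' := by
      rw [hz] at hz'
      exact Option.some.inj hz'
    rw [hvq, ← hz'eq, ← hw'eq, ← wcat_append]
  have hys : y ++ s = z ++ t := eq_of_all_tails key
  rw [hfx, hgx, hys]

theorem sameAction_iff_bdEquiv_aux (f g : W → Option W) (hf : isRIM f) (hg : isRIM g) :
    (∀ u v : ℕ → Bool, actRel f u v ↔ actRel g u v) ↔
      (endEquiv (domC g) (domC f) ∧
        (∃ β : ℕ → ℕ, ∀ x₁ ∈ domC g, ∀ x₂ ∈ domC f, pc x₁ x₂ →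
          x₁.length ≤ β x₂.length ∧ x₂.length ≤ β x₁.length)) ∧
      (endEquiv (Dom g) (Dom f) ∧ ∀ x, x ∈ Dom g → x ∈ Dom f → g x = f x) := by
  constructor
  · intro hAct
    have hfg : ends (domC f) ⊆ ends (domC g) := by
      rintro u ⟨p, hp, w, rfl⟩
      obtain ⟨y, hy⟩ := Option.ne_none_iff_exists'.mp hp.1
      obtain ⟨q, z, w', hq, hz, huq, hvq⟩ := (hAct _ _).mp ⟨p, y, w, hp, hy, rfl, rfl⟩
      exact ⟨q, hq, w', huq⟩
    have hgf : ends (domC g) ⊆ ends (domC f) := by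
      rintro u ⟨q, hq, w, rfl⟩
      obtain ⟨z, hz⟩ := Option.ne_none_iff_exists'.mp hq.1
      obtain ⟨p, y, w', hp, hy, hup, hvp⟩ := (hAct _ _).mpr ⟨q, z, w, hq, hz, rfl, rfl⟩
      exact ⟨p, hp, w', hup⟩
    have hEgf : endEquiv (domC g) (domC f) := fun R hR =>
      ⟨fun h => endHalf hgf R hR h, fun h => endHalf hfg R hR h⟩
    obtain ⟨β₁, hβ₁⟩ := bound_of_ends_subset (prefC_isPrefixCode _) hgf
    obtain ⟨β₂, hβ₂⟩ := bound_of_ends_subset (prefC_isPrefixCode _) hfg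
    have hagree : ∀ x, x ∈ Dom f → x ∈ Dom g → f x = g x :=
      agree_of_sameAction hf hg (fun u v => (hAct u v).mp)
    refine ⟨⟨hEgf, fun n => max (β₁ n) (β₂ n), ?_⟩, ?_, ?_⟩
    · intro x₁ h₁ x₂ h₂ hpc
      constructor
      · exact le_max_of_le_right (hβ₂ x₂ h₂ x₁ h₁ (Or.symm hpc))
      · exact le_max_of_le_left (hβ₁ x₁ h₁ x₂ h₂ hpc)
    · have e1 : RI (Dom g) = RI (domC g) := by
        rw [RI_of_rightIdeal (dom_rightIdeal hg), RI_domC hg]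
      have e2 : RI (Dom f) = RI (domC f) := by
        rw [RI_of_rightIdeal (dom_rightIdeal hf), RI_domC hf]
      exact (endEquiv_congr e1 e2).mpr hEgf
    · intro x hxg hxf
      exact (hagree x hxf hxg).symm
  · rintro ⟨⟨hE, β, hβ⟩, hDom, hagree⟩
    have hgf : ends (domC g) ⊆ ends (domC f) :=
      ends_subset_of_bd hE β (fun x₁ h₁ x₂ h₂ hpc => (hβ x₁ h₁ x₂ h₂ hpc).2)
    have hEfg : endEquiv (domC f) (domC g) := fun R hR => (hE R hR).symm
    have hfg : ends (domC f) ⊆ ends (domC g) :=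
      ends_subset_of_bd hEfg β (fun x₁ h₁ x₂ h₂ hpc => (hβ x₂ h₂ x₁ h₁ (Or.symm hpc)).1)
    intro u v
    constructor
    · exact act_mono hf hg hfg (fun x hxf hxg => (hagree x hxg hxf).symm) u v
    · exact act_mono hg hf hgf hagree u v

/-- two right-ideal morphisms have the same action on A^ω
    iff they are boundedly end-equivalent. -/
theorem sameAction_iff_bdEquiv (f g : W → Option W) (hf : isRIM f) (hg : isRIM g) :
    (∀ u v : ℕ → Bool, actRel f u v ↔ actRel g u v) ↔ bdEquivF g f := by
  exact sameAction_iff_bdEquiv_aux f g hf hg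
end

section
/- For every right-ideal morphism f of A* and every prefix code P ⊂ A*: (a) f⁻¹(P) is a prefix code, and (b) f⁻¹(P)·A* ⊆ f⁻¹(P·A*). Moreover, there is an example where the inclusion in (b) is strict: take f with domC(f) = 0*1, f(0ⁿ1) = 0ⁿ, and P = {ε}; then f⁻¹(P)·A* = 1·A* while f⁻¹(P·A*) = 0*1·A*. -/
open List

/-- The example morphism: fEx(0ⁿ1w) = 0ⁿw, with domC(fEx) = 0*1. -/
def fEx : W → Option W
  | [] => none
  | (false :: t) => (fEx t).map (fun y => false :: y)
  | (true :: t) => some t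

lemma fEx_rep_none : ∀ n, fEx (List.replicate n false) = none := by
  intro n
  induction n with
  | zero => rfl
  | succ n ih => simp [List.replicate_succ, fEx, ih]

lemma fEx_eval (n : ℕ) (w : W) :
    fEx (List.replicate n false ++ true :: w) = some (List.replicate n false ++ w) := by
  induction n with
  | zero => simp [fEx]
  | succ n ih => simp [List.replicate_succ, fEx, ih]

lemma fEx_dom : ∀ x : W, fEx x ≠ none → ∃ n w, x = List.replicate n false ++ true :: w := by
  intro x
  induction x with
  | nil => intro h; exact absurd rfl h
  | cons b t ih =>
    cases b
    · intro h
      have ht : fEx t ≠ none := by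
        intro h0; apply h; simp [fEx, h0]
      obtain ⟨n, w, rfl⟩ := ih ht
      exact ⟨n + 1, w, by simp [List.replicate_succ]⟩
    · intro _; exact ⟨0, t, rfl⟩

lemma fEx_rim : isRIM fEx := by
  intro x
  induction x with
  | nil => intro y h; simp [fEx] at h
  | cons b t ih =>
    cases b
    · intro y h w
      simp only [fEx, Option.map_eq_some_iff] at h
      obtain ⟨y', hy', rfl⟩ := h
      show (fEx (t ++ w)).map (fun y => false :: y) = some (false :: y' ++ w)
      rw [ih y' hy' w]
      rfl
    · intro y h w
      simp only [fEx, Option.some.injEq] at h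
      subst h
      simp [fEx]

lemma fEx_eq_nil : ∀ z : W, fEx z = some [] → z = [true] := by
  intro z h
  match z with
  | [] => simp [fEx] at h
  | false :: t => simp [fEx] at h
  | true :: t =>
    simp only [fEx, Option.some.injEq] at h
    simp [h]

lemma domC_fEx :
    domC fEx = {x : W | ∃ n : ℕ, x = List.replicate n false ++ [true]} := by
  ext x
  constructor
  · rintro ⟨hx, hmin⟩
    obtain ⟨n, w, rfl⟩ := fEx_dom x hx
    cases w with
    | nil => exact ⟨n, rfl⟩
    | cons c w' =>
      exfalso
      refine hmin (List.replicate n false ++ [true]) ⟨c :: w', by simp⟩ ?_ ?_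
      · intro h
        have := congrArg List.length h
        simp at this
      · simp [Dom, fEx_eval n []]
  · rintro ⟨n, rfl⟩
    refine ⟨by simp [Dom, fEx_eval n []], ?_⟩
    intro p hp hne
    have hlen : p.length < n + 1 := by
      have h1 : p.length ≤ (List.replicate n false ++ [true]).length := hp.length_le
      simp at h1
      rcases lt_or_eq_of_le h1 with h | h
      · exact h
      · exact absurd (List.IsPrefix.eq_of_length hp (by simp [h])) hne
    have hk : p.length ≤ n := Nat.lt_succ_iff.mp hlen
    have hpeq : p = List.replicate p.length false := by
      have := List.prefix_iff_eq_take.mp hp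
      rw [this, List.take_append_of_le_length (by simp [hk]), List.take_replicate]
      simp [Nat.min_eq_left hk]
    intro hpd
    exact hpd (by rw [hpeq]; exact fEx_rep_none p.length)

lemma RI_preim_eps : RI (fPreim fEx {([] : W)}) = {x : W | [true] <+: x} := by
  ext x
  constructor
  · rintro ⟨z, ⟨y, hy, hz⟩, w, rfl⟩
    simp only [Set.mem_singleton_iff] at hy
    subst hy
    rw [fEx_eq_nil z hz]
    exact ⟨w, rfl⟩
  · rintro ⟨w, rfl⟩
    exact ⟨[true], ⟨[], rfl, rfl⟩, w, rfl⟩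

lemma preim_RI_eps :
    fPreim fEx (RI {([] : W)}) =
      {x : W | ∃ n : ℕ, ∃ w : W, x = List.replicate n false ++ true :: w} := by
  ext x
  constructor
  · rintro ⟨y, _, h⟩
    exact fEx_dom x (by simp [h])
  · rintro ⟨n, w, rfl⟩
    exact ⟨List.replicate n false ++ w, ⟨[], rfl, List.replicate n false ++ w, rfl⟩,
      fEx_eval n w⟩

/-- preimages of prefix codes are prefix codes, f⁻¹(P)·A* ⊆ f⁻¹(P·A*),
    and the inclusion can be strict, as witnessed by the example fEx with P = {ε}. -/
theorem preimage_prefixCode :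
    (∀ (f : W → Option W), isRIM f → ∀ P : Set W, isPrefixCode P →
      isPrefixCode (fPreim f P) ∧ RI (fPreim f P) ⊆ fPreim f (RI P)) ∧
    isRIM fEx ∧
    domC fEx = {x : W | ∃ n : ℕ, x = List.replicate n false ++ [true]} ∧
    RI (fPreim fEx {([] : W)}) = {x : W | [true] <+: x} ∧
    fPreim fEx (RI {([] : W)}) =
      {x : W | ∃ n : ℕ, ∃ w : W, x = List.replicate n false ++ true :: w} ∧
    RI (fPreim fEx {([] : W)}) ≠ fPreim fEx (RI {([] : W)}) := by
  refine ⟨?_, fEx_rim, domC_fEx, RI_preim_eps, preim_RI_eps, ?_⟩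
  · intro f hf P hP
    constructor
    · rintro x ⟨a, ha, hfa⟩ y ⟨b, hb, hfb⟩ ⟨w, rfl⟩
      have h1 := hf x a hfa w
      rw [h1] at hfb
      have hab : a ++ w = b := by injection hfb
      have hab' : a = b := hP a ha b hb ⟨w, hab⟩
      have hw : w = [] := by
        rw [← hab'] at hab
        simpa using hab
      simp [hw]
    · rintro y ⟨x, ⟨a, ha, hfa⟩, w, rfl⟩
      exact ⟨a ++ w, ⟨a, ha, w, rfl⟩, hf x a hfa w⟩
  · rw [RI_preim_eps, preim_RI_eps]
    intro heq
    have h1 : ([false, true] : W) ∈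
        {x : W | ∃ n : ℕ, ∃ w : W, x = List.replicate n false ++ true :: w} :=
      ⟨1, [], rfl⟩
    rw [← heq] at h1
    obtain ⟨w, hw⟩ := h1
    simp at hw
end

section
/- For every right-ideal morphism g of A*: (1) imC(g) ⊆ g(domC(g)); (2) if g is injective then imC(g) = g(domC(g)); (3) if g' is an inverse of g (g g' g = g) with Dom(g') = Im(g), then g' is injective. -/
open List

/-- (1) imC(g) ⊆ g(domC(g)); (2) equality if g is injective;
    (3) an inverse g' of g with Dom(g') = Im(g) is injective. -/
theorem imC_image_domC (g : W → Option W) (hg : isRIM g) :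
    (imC g ⊆ fImage g (domC g)) ∧
    ((∀ x₁ x₂ y : W, g x₁ = some y → g x₂ = some y → x₁ = x₂) →
      imC g = fImage g (domC g)) ∧
    (∀ g' : W → Option W, pcomp g (pcomp g' g) = g → Dom g' = Im g →
      ∀ y₁ y₂ x : W, g' y₁ = some x → g' y₂ = some x → y₁ = y₂) := by

  have part1 : imC g ⊆ fImage g (domC g) := by
    rintro y ⟨⟨x, hx⟩, hmin⟩
    refine ⟨x, ⟨?_, ?_⟩, hx⟩
    · simp [Dom, hx]
    · rintro p ⟨w, rfl⟩ hne hp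
      obtain ⟨y', hy'⟩ := Option.ne_none_iff_exists'.mp hp
      have hgx := hg p y' hy' w
      rw [hx] at hgx
      have hyy : y = y' ++ w := by injection hgx
      rcases eq_or_ne w [] with rfl | hw
      · simp at hne
      · refine hmin y' ⟨w, hyy.symm⟩ ?_ ⟨p, hy'⟩
        intro h
        rw [h] at hyy
        exact hw (by simpa using hyy.symm)
  refine ⟨part1, ?_, ?_⟩
  · intro hinj
    apply Set.Subset.antisymm part1
    rintro y ⟨x, ⟨hxDom, hxmin⟩, hx⟩
    refine ⟨⟨x, hx⟩, ?_⟩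
    rintro p ⟨w, rfl⟩ hne ⟨x', hx'⟩
    have hgx := hg x' p hx' w
    have hxx : x = x' ++ w := hinj x (x' ++ w) (p ++ w) hx hgx
    rcases eq_or_ne w [] with rfl | hw
    · simp at hne
    · refine hxmin x' ⟨w, hxx.symm⟩ ?_ (by simp [Dom, hx'])
      intro h
      rw [h] at hxx
      exact hw (by simpa using hxx.symm)
  · intro g' hcomp hdom y₁ y₂ x h1 h2
    have im1 : y₁ ∈ Im g := hdom ▸ (by simp [Dom, h1] : y₁ ∈ Dom g')
    have im2 : y₂ ∈ Im g := hdom ▸ (by simp [Dom, h2] : y₂ ∈ Dom g')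
    obtain ⟨u₁, hu₁⟩ := im1
    obtain ⟨u₂, hu₂⟩ := im2
    have e1 : pcomp g (pcomp g' g) u₁ = g u₁ := by rw [hcomp]
    have e2 : pcomp g (pcomp g' g) u₂ = g u₂ := by rw [hcomp]
    simp [pcomp, hu₁, h1] at e1
    simp [pcomp, hu₂, h2] at e2
    rw [e1] at e2
    injection e2
end

section
/- Let h and g be right-ideal morphisms of A* such that h∘g∘h ≡_bd h. Then h∘g∘h ⊆ h (as partial functions), and (h∘g∘h) ∘ g ∘ (h∘g∘h) = h∘g∘h; in particular h∘g∘h is a regular element with inverse g. -/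
open List

theorem pcomp_assoc (f g k : W → Option W) : pcomp (pcomp f g) k = pcomp f (pcomp g k) := by
  funext x
  simp only [pcomp, Option.bind_assoc]
  rfl

theorem pcomp_apply_of_eq_some {f g : W → Option W} {x y : W} (hx : g x = some y) :
    pcomp f g x = f y := by
  simp only [pcomp, hx, Option.bind_some]

theorem Dom_pcomp_subset (f g : W → Option W) : Dom (pcomp f g) ⊆ Dom g := by
  intro x hx hgx
  exact hx (by simp only [pcomp, hgx, Option.bind_none])

theorem sub_of_endEquivF {f g : W → Option W} (hfg : endEquivF f g) (hdom : Dom f ⊆ Dom g) :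
    sub f g := by
  intro x y hx
  have hxf : x ∈ Dom f := by simp [Dom, hx]
  rw [← hfg.2 x hxf (hdom hxf), hx]

theorem pcomp_self_apply_of_eq_some {f : W → Option W} {y : W} (hy : f y = some y) :
    pcomp f f y = some y := by
  rw [pcomp_apply_of_eq_some hy, hy]

/-- If `hgh ⊆ h`, every value `y = hgh x = h x` is a fixed point of `hg`, hence of `(hg)(hg) = (hgh)g`;
so `(hgh)g(hgh) x = ((hgh)g) y = y`. -/
theorem pcomp_regular_of_sub {h g : W → Option W} (hsub : sub (pcomp h (pcomp g h)) h) :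
    pcomp (pcomp h (pcomp g h)) (pcomp g (pcomp h (pcomp g h))) = pcomp h (pcomp g h) := by
  set F := pcomp h (pcomp g h) with hF
  have hFg : pcomp F g = pcomp (pcomp h g) (pcomp h g) := by
    rw [hF, ← pcomp_assoc, pcomp_assoc _ h g]
  funext x
  rw [← pcomp_assoc]
  cases hFx : F x with
  | none => simp only [pcomp, hFx, Option.bind_none]
  | some y =>
    have hfix : pcomp h g y = some y := by
      rw [← hFx, hF, ← pcomp_assoc, pcomp_apply_of_eq_some (hsub x y hFx)]
    rw [pcomp_apply_of_eq_some hFx, hFg, pcomp_self_apply_of_eq_some hfix]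

theorem regular_of_bdEquiv_general (h g : W → Option W)
    (hyp : bdEquivF (pcomp h (pcomp g h)) h) :
    sub (pcomp h (pcomp g h)) h ∧
    pcomp (pcomp h (pcomp g h)) (pcomp g (pcomp h (pcomp g h))) =
      pcomp h (pcomp g h) := by
  have hsub : sub (pcomp h (pcomp g h)) h :=
    sub_of_endEquivF hyp.2 (Dom_pcomp_subset h _ |>.trans (Dom_pcomp_subset g h))
  exact ⟨hsub, pcomp_regular_of_sub hsub⟩

/-- if hgh ≡_bd h then hgh ⊆ h and hgh is regular with inverse g. -/
theorem regular_of_bdEquiv (h g : W → Option W)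
    (hh : isRIM h) (hg : isRIM g)
    (hyp : bdEquivF (pcomp h (pcomp g h)) h) :
    sub (pcomp h (pcomp g h)) h ∧
    pcomp (pcomp h (pcomp g h)) (pcomp g (pcomp h (pcomp g h))) =
      pcomp h (pcomp g h) :=
  regular_of_bdEquiv_general h g hyp
end
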